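/- Let q be a prime power, a | (q+1), t = (q^2-1)/a, υ an integer with t | (qi+j) and qi+j = υt, where 0 < qi+j ≤ q^2−1−(q+1)^2/a and 0 ≤ i,j ≤ q−1. Then i = υ(q+1)/a − 1 and j = q − υ(q+1)/a. -/

import Mathlib

/-! With `a * b = q + 1` we get `t = (q - 1) * b`, so `υ * t = (q - 1) * m` for `m = υ * b`, and
`1 ≤ m ≤ q` because `0 < υ < a`. Then `(q - 1) * m = q * (m - 1) + (q - m)` is the base-`q`
expansion of `q * i + j`, and uniqueness of the digits gives `i = m - 1`, `j = q - m`. -/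

lemma Nat.sq_sub_one_div_eq_of_mul_eq {q a b : ℕ} (hab : a * b = q + 1) :
    (q ^ 2 - 1) / a = (q - 1) * b := by
  have ha : 0 < a := Nat.pos_of_ne_zero fun h => by simp [h] at hab
  have hsq : q ^ 2 - 1 = a * ((q - 1) * b) := by
    rw [← one_pow 2, Nat.sq_sub_sq, one_pow, ← hab]
    ring
  rw [hsq, Nat.mul_div_cancel_left _ ha]

lemma Nat.pred_mul_eq_mul_add {q m : ℕ} (hm : 1 ≤ m) (hmq : m ≤ q) :
    (q - 1) * m = q * (m - 1) + (q - m) := by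
  zify [hm, hmq, hm.trans hmq]
  ring

lemma Nat.eq_and_eq_of_mul_add_eq_mul_add {q i j i' j' : ℕ} (hj : j < q) (hj' : j' < q)
    (h : q * i + j = q * i' + j') : i = i' ∧ j = j' := by
  have hq : 0 < q := Nat.zero_lt_of_lt hj
  obtain ⟨hdiv, hmod⟩ :=
    (Nat.div_mod_unique (a := q * i' + j') (d := i) (c := j) hq).mpr ⟨by rw [← h]; ring, hj⟩
  obtain ⟨hdiv', hmod'⟩ :=
    (Nat.div_mod_unique (a := q * i' + j') (d := i') (c := j') hq).mpr ⟨by ring, hj'⟩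
  exact ⟨hdiv.symm.trans hdiv', hmod.symm.trans hmod'⟩

theorem stmt4_general (q a t i j υ : ℕ) (ha : a ∣ q + 1)
    (ht : t = (q ^ 2 - 1) / a)
    (hj : j ≤ q - 1)
    (hυ1 : 0 < υ) (hυ2 : υ < a) (heq : q * i + j = υ * t) :
    i = υ * ((q + 1) / a) - 1 ∧ j = q - υ * ((q + 1) / a) := by
  obtain ⟨b, hab⟩ := ha
  have hb : (q + 1) / a = b := by rw [hab, Nat.mul_div_cancel_left _ (by omega)]
  have hb0 : 0 < b := Nat.pos_of_ne_zero fun h => by simp [h] at hab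
  have hm : 1 ≤ υ * b := Nat.mul_pos hυ1 hb0
  have hmq : υ * b ≤ q := by
    have : υ * b + b ≤ a * b := by rw [← Nat.succ_mul]; exact Nat.mul_le_mul_right b hυ2
    omega
  have hexp : q * i + j = q * (υ * b - 1) + (q - υ * b) := by
    rw [heq, ht, Nat.sq_sub_one_div_eq_of_mul_eq hab.symm, ← Nat.pred_mul_eq_mul_add hm hmq]
    ring
  rw [hb]
  exact Nat.eq_and_eq_of_mul_add_eq_mul_add (by omega) (by omega) hexp

theorem stmt4 (q a t i j υ : ℕ) (hq : IsPrimePow q) (ha : a ∣ q + 1)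
    (ht : t = (q ^ 2 - 1) / a)
    (hpos : 0 < q * i + j) (hub : q * i + j ≤ q ^ 2 - 1 - (q + 1) ^ 2 / a)
    (hi : i ≤ q - 1) (hj : j ≤ q - 1)
    (hυ1 : 0 < υ) (hυ2 : υ < a) (heq : q * i + j = υ * t) :
    i = υ * ((q + 1) / a) - 1 ∧ j = q - υ * ((q + 1) / a) :=
  stmt4_general q a t i j υ ha ht hj hυ1 hυ2 heq
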